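/- arXiv:1202.0870 — 5 statements merged into one kernel-verified Lean document; each statement's English description precedes it below -/
import Mathlib

section
/- Let q > 1 be real and N real with |N - (q+1)| ≤ 2√q and N > 0. Then both roots of the quadratic polynomial P(T) = (1 + N/(q²-1)) + (-2 + (2q-3)N/(q-1) + N²/(q²-1))·T + (1 + N/(q²-1))·q³T² are complex (non-real), i.e. its discriminant is strictly negative. -/
/-!
Write `q = s²` with `s = √q > 1`, so that Hasse's bound reads `(s - 1)² ≤ N ≤ (s + 1)²`.
After multiplying through by `(q² - 1)²` the discriminant `A² - 4q³B²` becomes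
`(Ã - 2s³B̃)(Ã + 2s³B̃)` with `Ã = (q² - 1)A` and `B̃ = (q² - 1)B`. As quadratics in `N`, the
second factor has positive coefficients, while the first is convex and negative at both ends of
the Hasse interval, hence negative on all of it.
-/

open Set

lemma quadratic_neg_of_mem_Icc {a b c d x : ℝ} (hx : x ∈ Icc a b)
    (ha : a ^ 2 + c * a + d < 0) (hb : b ^ 2 + c * b + d < 0) :
    x ^ 2 + c * x + d < 0 := by
  -- `(x - a)(b - x) ≥ 0` bounds the quadratic by its chord, which is monotone in `x`
  have hchord : x ^ 2 ≤ (a + b) * x - a * b := by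
    nlinarith [mul_nonneg (sub_nonneg.2 hx.1) (sub_nonneg.2 hx.2)]
  rcases le_total 0 (a + b + c) with hslope | hslope
  · nlinarith [mul_le_mul_of_nonneg_left hx.2 hslope]
  · nlinarith [mul_le_mul_of_nonpos_left hx.1 hslope]

lemma mem_Icc_of_abs_sub_le {s N : ℝ} (hN : |N - (s ^ 2 + 1)| ≤ 2 * s) :
    N ∈ Icc ((s - 1) ^ 2) ((s + 1) ^ 2) := by
  obtain ⟨hlo, hhi⟩ := abs_le.1 hN
  constructor <;> linarith

lemma discriminant_lower_factor_neg {s N : ℝ} (hs : 1 < s)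
    (hN : N ∈ Icc ((s - 1) ^ 2) ((s + 1) ^ 2)) :
    N ^ 2 + (2 * s ^ 4 - 2 * s ^ 3 - s ^ 2 - 3) * N - 2 * (s ^ 4 - 1) * (s ^ 3 + 1) < 0 := by
  have hs0 : 0 < s := by linarith
  have hs1 : 0 < s - 1 := by linarith
  apply quadratic_neg_of_mem_Icc hN
  · have : 0 < 2 * s * (s - 1) * (s ^ 5 + 3 * s ^ 3 + s ^ 2 + 2 * s + 1) := by positivity
    linear_combination this
  · have : 0 < 2 * s * (s - 1) ^ 2 * (s + 1) * (s ^ 3 + 1) := by positivity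
    linear_combination this

lemma discriminant_upper_factor_pos {s N : ℝ} (hs : 1 < s) (hN : 0 ≤ N) :
    0 < N ^ 2 + (2 * s ^ 4 + 2 * s ^ 3 - s ^ 2 - 3) * N + 2 * (s ^ 4 - 1) * (s ^ 3 - 1) := by
  have hs1 : 0 < s - 1 := by linarith
  have h4 : 0 < s ^ 4 - 1 := sub_pos.2 (one_lt_pow₀ hs four_ne_zero)
  have h3 : 0 < s ^ 3 - 1 := sub_pos.2 (one_lt_pow₀ hs three_ne_zero)
  have : 0 ≤ (s - 1) * (2 * s ^ 3 + 4 * s ^ 2 + 3 * s + 3) * N := by positivity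
  nlinarith

lemma discriminant_eq_mul_div {s N : ℝ} (hs : 1 < s) :
    (-2 + (2 * s ^ 2 - 3) * N / (s ^ 2 - 1) + N ^ 2 / ((s ^ 2) ^ 2 - 1)) ^ 2
      - 4 * (1 + N / ((s ^ 2) ^ 2 - 1)) ^ 2 * (s ^ 2) ^ 3
      = (N ^ 2 + (2 * s ^ 4 - 2 * s ^ 3 - s ^ 2 - 3) * N - 2 * (s ^ 4 - 1) * (s ^ 3 + 1))
        * (N ^ 2 + (2 * s ^ 4 + 2 * s ^ 3 - s ^ 2 - 3) * N + 2 * (s ^ 4 - 1) * (s ^ 3 - 1))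
        / ((s ^ 2) ^ 2 - 1) ^ 2 := by
  have h1 : s ^ 2 - 1 ≠ 0 := (sub_pos.2 (one_lt_pow₀ hs two_ne_zero)).ne'
  have h2 : (s ^ 2) ^ 2 - 1 = (s ^ 2 - 1) * (s ^ 2 + 1) := by ring
  rw [h2]
  field_simp
  ring

theorem stmt_1_general (q N : ℝ) (hq : 1 < q)
    (hN : |N - (q + 1)| ≤ 2 * Real.sqrt q) :
    (-2 + (2 * q - 3) * N / (q - 1) + N ^ 2 / (q ^ 2 - 1)) ^ 2
      - 4 * (1 + N / (q ^ 2 - 1)) ^ 2 * q ^ 3 < 0 := by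
  obtain ⟨s, hs0, rfl⟩ : ∃ s : ℝ, 0 ≤ s ∧ s ^ 2 = q :=
    ⟨Real.sqrt q, Real.sqrt_nonneg q, Real.sq_sqrt (by linarith)⟩
  rw [Real.sqrt_sq hs0] at hN
  have hs : 1 < s := (one_lt_sq_iff₀ hs0).1 hq
  have hHasse := mem_Icc_of_abs_sub_le hN
  rw [discriminant_eq_mul_div hs]
  exact div_neg_of_neg_of_pos
    (mul_neg_of_neg_of_pos (discriminant_lower_factor_neg hs hHasse)
      (discriminant_upper_factor_pos hs ((sq_nonneg _).trans hHasse.1)))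
    (pow_pos (sub_pos.2 (one_lt_pow₀ hq two_ne_zero)) 2)

/-- RH for the rank 3 zeta: the discriminant of the quadratic numerator is negative. -/
theorem stmt_1 (q N : ℝ) (hq : 1 < q) (hN0 : 0 < N)
    (hN : |N - (q + 1)| ≤ 2 * Real.sqrt q) :
    (-2 + (2 * q - 3) * N / (q - 1) + N ^ 2 / (q ^ 2 - 1)) ^ 2
      - 4 * (1 + N / (q ^ 2 - 1)) ^ 2 * q ^ 3 < 0 :=
  stmt_1_general q N hq hN
end

section
/- Let q > 1 and N > 0 be real. Then α¹ + α² + α³ = (N/(q-1))(1 + N/(q²-1)), where α¹ = (q³-1)/((q³-1)(q³-q)(q³-q²)) + (q²-1)/((q-1)²q³) + (q-1)/((q-1)q²), α² = (N-1)·[(q²-1)/((q²-1)(q²-q)(q-1)) + (q-1)/((q²-q)(q-1))], and α³ = (N² + (q²-q-2)N + 1)/((q²-1)(q-1)). -/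
/-- The counting miracle in rank 3: `α_{E,3}(0) = β_{E,2}(0)`. -/
theorem stmt_9 (q N : ℝ) (hq : 1 < q) (hN : 0 < N) :
    ((q ^ 3 - 1) / ((q ^ 3 - 1) * (q ^ 3 - q) * (q ^ 3 - q ^ 2))
        + (q ^ 2 - 1) / ((q - 1) ^ 2 * q ^ 3) + (q - 1) / ((q - 1) * q ^ 2))
      + (N - 1) * ((q ^ 2 - 1) / ((q ^ 2 - 1) * (q ^ 2 - q) * (q - 1))
        + (q - 1) / ((q ^ 2 - q) * (q - 1)))
      + (N ^ 2 + (q ^ 2 - q - 2) * N + 1) / ((q ^ 2 - 1) * (q - 1))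
      = N / (q - 1) * (1 + N / (q ^ 2 - 1)) := by
  have h0 : (0:ℝ) < q := lt_trans one_pos hq
  have h1 : q - 1 ≠ 0 := sub_ne_zero.2 (ne_of_gt hq)
  have h2 : q + 1 ≠ 0 := by nlinarith
  have h3 : q ≠ 0 := ne_of_gt h0
  have h4 : q ^ 2 + q + 1 ≠ 0 := by nlinarith [sq_nonneg q]
  have e1 : q ^ 3 - 1 = (q - 1) * (q ^ 2 + q + 1) := by ring
  have e2 : q ^ 3 - q = q * (q - 1) * (q + 1) := by ring
  have e3 : q ^ 3 - q ^ 2 = q ^ 2 * (q - 1) := by ring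
  have e4 : q ^ 2 - 1 = (q - 1) * (q + 1) := by ring
  have e5 : q ^ 2 - q = q * (q - 1) := by ring
  rw [e1, e2, e3, e4, e5]
  field_simp
  ring
end

section
/- For q > 1 real and N real with |N-(q+1)| ≤ 2√q, the polynomial P(T) = 1 + (N-2)T + q²T² satisfies: both complex roots have absolute value 1/q. -/
/-!
Completing the square, `w = 2 a z + b` satisfies `w ^ 2 = b ^ 2 - 4 a c`. When this discriminant is
nonpositive, `w` is purely imaginary with `w.im ^ 2 = 4 a c - b ^ 2`, so
`‖2 a z‖ ^ 2 = ‖w - b‖ ^ 2 = b ^ 2 + w.im ^ 2 = 4 a c` and `‖z‖ ^ 2 = c / a`.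
For `1 + (N - 2) T + q ^ 2 T ^ 2` the discriminant is `(N - 2) ^ 2 - 4 q ^ 2`, which the Hasse bound
makes nonpositive; hence `‖T‖ ^ 2 = 1 / q ^ 2`.
-/

namespace Complex

theorem re_eq_zero_and_im_sq_of_sq_eq_ofReal {w : ℂ} {d : ℝ} (hw : w ^ 2 = d) (hd : d ≤ 0) :
    w.re = 0 ∧ w.im ^ 2 = -d := by
  have hre : w.re ^ 2 - w.im ^ 2 = d := by
    have := congrArg re hw
    rw [sq, mul_re, ofReal_re] at this
    linarith
  have him : 2 * w.re * w.im = 0 := by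
    have := congrArg im hw
    rw [sq, mul_im, ofReal_im] at this
    linarith
  have hwre : w.re = 0 := by
    rcases mul_eq_zero.mp him with h | h
    · linarith
    · nlinarith [sq_nonneg w.re]
  exact ⟨hwre, by rw [hwre] at hre; linarith⟩

theorem normSq_eq_div_of_quadratic_eq_zero {a b c : ℝ} (ha : a ≠ 0) (hdisc : b ^ 2 ≤ 4 * a * c)
    {z : ℂ} (hz : a * z ^ 2 + b * z + c = 0) : normSq z = c / a := by
  set w : ℂ := 2 * a * z + b with hw_def
  have hw : w ^ 2 = ((b ^ 2 - 4 * a * c : ℝ) : ℂ) := by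
    push_cast
    linear_combination 4 * (a : ℂ) * hz
  obtain ⟨hwre, hwim⟩ := re_eq_zero_and_im_sq_of_sq_eq_ofReal hw (by linarith)
  have hz_eq : z = (w - b) / (2 * a) := by
    have ha' : (a : ℂ) ≠ 0 := ofReal_ne_zero.mpr ha
    rw [hw_def]
    field_simp
    ring
  have hnum : normSq (w - b) = 4 * a * c := by
    rw [normSq_apply]
    simp only [sub_re, sub_im, ofReal_re, ofReal_im, hwre, sub_zero]
    nlinarith [hwim]
  rw [hz_eq, normSq_div, hnum, ← ofReal_ofNat, ← ofReal_mul, normSq_ofReal]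
  field_simp
  ring

end Complex

theorem abs_sub_two_le_of_abs_sub_le_two_sqrt {q N : ℝ} (hq : 1 ≤ q)
    (hN : |N - (q + 1)| ≤ 2 * √q) : |N - 2| ≤ 2 * q := by
  have hs : √q ^ 2 = q := Real.sq_sqrt (by linarith)
  have hs1 : 1 ≤ √q := Real.one_le_sqrt.mpr hq
  obtain ⟨hlo, hhi⟩ := abs_le.mp hN
  refine abs_le.mpr ⟨?_, ?_⟩ <;> nlinarith [sq_nonneg (√q - 1)]

/-- RH for the SL₂ zeta: both complex roots of `1 + (N-2)T + q²T²` have absolute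
value `1/q` under the Hasse bound. -/
theorem stmt_11 (q N : ℝ) (hq : 1 < q) (hN : |N - (q + 1)| ≤ 2 * Real.sqrt q) :
    ∀ z : ℂ, 1 + ((N : ℂ) - 2) * z + (q : ℂ) ^ 2 * z ^ 2 = 0 →
      ‖z‖ = 1 / q := by
  intro z hz
  have hq0 : 0 < q := by linarith
  have hdisc : (N - 2) ^ 2 ≤ 4 * q ^ 2 * 1 := by
    have := sq_le_sq.mpr ((abs_sub_two_le_of_abs_sub_le_two_sqrt hq.le hN).trans (le_abs_self _))
    linarith
  have hnormSq : Complex.normSq z = 1 / q ^ 2 :=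
    Complex.normSq_eq_div_of_quadratic_eq_zero (pow_ne_zero 2 hq0.ne') hdisc (by
      push_cast
      linear_combination hz)
  rw [← sq_eq_sq₀ (norm_nonneg z) (by positivity), Complex.sq_norm, hnormSq, div_pow, one_pow]
end

section
/- Let q > 1 and N be real. Define P(T) = B·(1+q⁶T⁴) + C·(T+q³T³) + D·qT² where B = 1 + N/(q²-1), C = -(q²+q+2) + N(q-3)/(q-1) + N²/(q²-1), and D = 2(q²+q+1) - N(2q³-q²-4q-3)/(q²-1) - N²/(q-1). Then P(T) = (1-qT)(1-q²T)·[B + (-2 + (2q-3)N/(q-1) + N²/(q²-1))T + Bq³T²] as polynomials in T. -/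
/-- Factorization of the SL₃ zeta numerator: `P^{SL₃}_E(T)` is divisible by
`(1-qT)(1-q²T)` with quotient `P^{SL₃}_{E,o}(T)`. -/
theorem stmt_13 (q N : ℝ) (hq : 1 < q) (B C D : ℝ)
    (hB : B = 1 + N / (q ^ 2 - 1))
    (hC : C = -(q ^ 2 + q + 2) + N * (q - 3) / (q - 1) + N ^ 2 / (q ^ 2 - 1))
    (hD : D = 2 * (q ^ 2 + q + 1) - N * (2 * q ^ 3 - q ^ 2 - 4 * q - 3) / (q ^ 2 - 1)
        - N ^ 2 / (q - 1)) :
    ∀ T : ℝ,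
      B * (1 + q ^ 6 * T ^ 4) + C * (T + q ^ 3 * T ^ 3) + D * q * T ^ 2
        = (1 - q * T) * (1 - q ^ 2 * T)
            * (B + (-2 + (2 * q - 3) * N / (q - 1) + N ^ 2 / (q ^ 2 - 1)) * T
                + B * q ^ 3 * T ^ 2) := by
  intro T
  have h1 : q - 1 ≠ 0 := by nlinarith
  have h2 : q ^ 2 - 1 ≠ 0 := by nlinarith
  subst hB hC hD
  field_simp
  ring
end

section
/- Let q > 1 and N be real. Then (N/(q-1))·[(1+N/(q²-1))(1+q³T²) + (-2+(2q-3)N/(q-1)+N²/(q²-1))T] equals α + β·(q³-1)T/((1-T)(1-q³T)) multiplied by (1-T)(1-q³T), where α = (N/(q-1))(1+N/(q²-1)) and β = (N/(q-1))[1 + (q+2)N/(q³-1) + N²/((q³-1)(q²-1))]. -/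
/-- Uniformity in rank 3: the numerator of the rank 3 pure zeta equals
`N/(q-1)` times the SL₃ numerator `P^{SL₃}_{E,o}(T)`. -/
theorem stmt_14 (q N : ℝ) (hq : 1 < q) (α β : ℝ)
    (hα : α = N / (q - 1) * (1 + N / (q ^ 2 - 1)))
    (hβ : β = N / (q - 1) * (1 + (q + 2) * N / (q ^ 3 - 1)
        + N ^ 2 / ((q ^ 3 - 1) * (q ^ 2 - 1)))) :
    ∀ T : ℝ,
      N / (q - 1) * ((1 + N / (q ^ 2 - 1)) * (1 + q ^ 3 * T ^ 2)
          + (-2 + (2 * q - 3) * N / (q - 1) + N ^ 2 / (q ^ 2 - 1)) * T)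
        = α * ((1 - T) * (1 - q ^ 3 * T)) + β * (q ^ 3 - 1) * T := by
  intro T
  have h1 : q - 1 ≠ 0 := by nlinarith
  have h2 : q ^ 2 - 1 ≠ 0 := by nlinarith
  have h3 : q ^ 3 - 1 ≠ 0 := by nlinarith
  subst hα hβ
  field_simp
  ring
end
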